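/- Fix ρ > 0, set μ = 2/ρ and g_ρ(y) = (4/ρ)e^{−μy}. Let h be C¹ with compact support in (0,∞) (or more generally smooth enough with ∫₀^∞ H(y)² e^{μy} dy < ∞) satisfying ∫₀^∞ y h(y) dy = 0, and let H(y) = ∫_y^∞ h, 𝓛h(y) = −H(y) − y h(y) + (g_ρ*H)(y). Then ∫₀^∞ H(y) 𝓛h(y) e^{μy} dy ≤ − ∫₀^∞ H(y)² e^{μy} dy. -/

import Mathlib

/-!
Put `K y = ∫_y^∞ H` and `P y = ∫_0^y e^{μt} H t`. Since `4/ρ = 2μ`, the convolution term of `𝓛h`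
is `2μ e^{-μy} P y`, and since `h` has zero first moment, `K 0 = ∫_0^∞ H = ∫_0^∞ y h = 0`.
The potential
`Φ = ½ y H² e^{μy} - 2μ K P - ½ e^{μy} (K²/y + (2μ - μ²y) K²)`
satisfies `Φ' = H 𝓛h e^{μy} + H² e^{μy} + ½ (1 + μy) e^{μy} (N/y)²` with `N = y H + (1 - μy) K`,
and it vanishes at `0` and beyond the support of `h`. Integrating `Φ'` over `(0, ∞)` gives
`∫ H 𝓛h e^{μy} + ∫ H² e^{μy} = -½ ∫ (1 + μy) e^{μy} (N/y)² ≤ 0`.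
The singular terms `K²/y` and `N/y` stay continuous at `0` because `K` and `N'` vanish there.
-/

open MeasureTheory Real Set

lemma HasCompactSupport.exists_nonneg_forall_gt_eq_zero {M : Type*} [Zero M] {f : ℝ → M}
    (hf : HasCompactSupport f) : ∃ B, 0 ≤ B ∧ ∀ x, B < x → f x = 0 := by
  obtain ⟨R, hR⟩ := hf.isCompact.bddAbove
  exact ⟨max R 0, le_max_right _ _, fun x hx => image_eq_zero_of_notMem_tsupport fun hx' =>
    (hR hx').not_gt ((le_max_left _ _).trans_lt hx)⟩

lemma setIntegral_Ioi_eq_intervalIntegral {f : ℝ → ℝ} {a B : ℝ}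
    (hf : IntervalIntegrable f volume a B) (hB : ∀ x, B < x → f x = 0) :
    ∫ x in Ioi a, f x = ∫ x in a..B, f x := by
  have hzero : EqOn f 0 (Ioi B) := fun x hx => hB x hx
  rw [← intervalIntegral.integral_interval_add_Ioi' hf
      ((integrableOn_congr_fun hzero measurableSet_Ioi).2 integrableOn_zero),
    setIntegral_eq_zero_of_forall_eq_zero hzero, add_zero]

lemma hasDerivAt_integral_Ioi {f : ℝ → ℝ} (hf : Integrable f) (hc : Continuous f) (y : ℝ) :
    HasDerivAt (fun u => ∫ x in Ioi u, f x) (-f y) y := by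
  have htail : (fun u => ∫ x in Ioi u, f x) = fun u => (∫ x in Ioi 0, f x) - ∫ x in 0..u, f x :=
    funext fun u => eq_sub_of_add_eq'
      (intervalIntegral.integral_interval_add_Ioi hf.integrableOn hf.integrableOn)
  rw [htail]
  exact (hc.integral_hasStrictDerivAt 0 y).hasDerivAt.const_sub _

lemma intervalIntegral_exp_mul_comp_sub (μ c y : ℝ) (f : ℝ → ℝ) :
    ∫ x in (0:ℝ)..y, c * exp (-μ * x) * f (y - x)
      = c * exp (-(μ * y)) * ∫ t in (0:ℝ)..y, exp (μ * t) * f t := by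
  have hsplit : ∀ x, c * exp (-μ * x) * f (y - x)
      = c * exp (-(μ * y)) * (exp (μ * (y - x)) * f (y - x)) := fun x => by
    rw [show exp (-μ * x) = exp (-(μ * y)) * exp (μ * (y - x)) by rw [← exp_add]; ring_nf]
    ring
  simp_rw [hsplit]
  rw [intervalIntegral.integral_const_mul,
    intervalIntegral.integral_comp_sub_left (fun t => exp (μ * t) * f t), sub_self, sub_zero]

/-- `f 0 / 0 = 0` in Lean, and `0` is also the limit of `f t / t` because `f' 0 = 0`. -/
lemma continuous_div_id_of_hasDerivAt_zero {f : ℝ → ℝ} (hf : Continuous f) (h0 : f 0 = 0)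
    (hd : HasDerivAt f 0 0) : Continuous fun t => f t / t := by
  refine continuous_iff_continuousAt.2 fun x => ?_
  rcases eq_or_ne x 0 with rfl | hx
  · rw [← continuousWithinAt_compl_self, ContinuousWithinAt, div_zero]
    convert hasDerivAt_iff_tendsto_slope.1 hd using 2 with t
    rw [slope_def_field, h0, sub_zero, sub_zero]
  · exact hf.continuousAt.div continuousAt_id hx

/-- The paper's `𝓛h`, with `g_ρ * H` written as `2μ e^{-μy} ∫_0^y e^{μt} H t` (recall `4/ρ = 2μ`). -/
noncomputable def linearizedOp (μ : ℝ) (H h : ℝ → ℝ) (y : ℝ) : ℝ :=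
  -H y - y * h y + 2 * μ * exp (-(μ * y)) * ∫ t in (0:ℝ)..y, exp (μ * t) * H t

lemma continuous_linearizedOp {μ : ℝ} {H h : ℝ → ℝ} (hH : Continuous H) (hh : Continuous h) :
    Continuous (linearizedOp μ H h) := by
  have hP := intervalIntegral.continuous_primitive (μ := volume)
    (fun a b => (by fun_prop : Continuous fun t => exp (μ * t) * H t).intervalIntegrable a b) 0
  unfold linearizedOp
  fun_prop

noncomputable def gapPotential (μ : ℝ) (H K P : ℝ → ℝ) (y : ℝ) : ℝ :=
  1 / 2 * y * H y ^ 2 * exp (μ * y) - 2 * μ * K y * P y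
    - 1 / 2 * exp (μ * y) * (K y ^ 2 / y + (2 * μ - μ ^ 2 * y) * K y ^ 2)

noncomputable def gapRemainder (μ : ℝ) (H K : ℝ → ℝ) (y : ℝ) : ℝ :=
  1 / 2 * (1 + μ * y) * exp (μ * y) * ((y * H y + (1 - μ * y) * K y) / y) ^ 2

section gapPotential

variable {μ y : ℝ} {H h K P : ℝ → ℝ}

lemma hasDerivAt_gapPotential (hy : y ≠ 0) (hH : HasDerivAt H (-h y) y)
    (hK : HasDerivAt K (-H y) y) (hP : HasDerivAt P (exp (μ * y) * H y) y) :
    HasDerivAt (gapPotential μ H K P)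
      (H y * (-H y - y * h y + 2 * μ * exp (-(μ * y)) * P y) * exp (μ * y)
        + H y ^ 2 * exp (μ * y)
        + gapRemainder μ H K y) y := by
  have hexp : HasDerivAt (fun s => exp (μ * s)) (exp (μ * y) * (μ * 1)) y :=
    ((hasDerivAt_id y).const_mul μ).exp
  have hquot := (hK.pow 2).div (hasDerivAt_id y) hy
  have hlin := (((hasDerivAt_id y).const_mul (μ ^ 2)).const_sub (2 * μ)).mul (hK.pow 2)
  refine (((((hasDerivAt_id y).const_mul (1 / 2)).mul (hH.pow 2)).mul hexp).sub
    ((hK.const_mul (2 * μ)).mul hP) |>.sub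
      ((hexp.const_mul (1 / 2)).mul (hquot.add hlin))).congr_deriv ?_
  simp only [gapRemainder, id_eq, exp_neg, Pi.mul_apply, Pi.pow_apply, Pi.div_apply, Pi.add_apply]
  field_simp
  ring

lemma continuous_gapPotential (hH : Continuous H) (hK : ∀ y, HasDerivAt K (-H y) y)
    (hK0 : K 0 = 0) (hP : Continuous P) : Continuous (gapPotential μ H K P) := by
  have hKc : Continuous K := continuous_iff_continuousAt.2 fun y => (hK y).continuousAt
  have hquot : Continuous fun y => K y ^ 2 / y :=
    continuous_div_id_of_hasDerivAt_zero (hKc.pow 2) (by simp [hK0])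
      (by simpa [hK0] using (hK 0).fun_pow 2)
  unfold gapPotential
  fun_prop

lemma continuous_gapRemainder (hH : Continuous H) (hH0 : DifferentiableAt ℝ H 0)
    (hK : ∀ y, HasDerivAt K (-H y) y) (hK0 : K 0 = 0) : Continuous (gapRemainder μ H K) := by
  have hKc : Continuous K := continuous_iff_continuousAt.2 fun y => (hK y).continuousAt
  have hN0 : HasDerivAt (fun y => y * H y + (1 - μ * y) * K y) 0 0 :=
    (((hasDerivAt_id 0).mul hH0.hasDerivAt).add
      ((((hasDerivAt_id 0).const_mul μ).const_sub 1).mul (hK 0))).congr_deriv (by simp [hK0])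
  have hquot := continuous_div_id_of_hasDerivAt_zero (by fun_prop) (by simp [hK0]) hN0
  unfold gapRemainder
  fun_prop

lemma gapRemainder_nonneg (hμ : 0 ≤ μ) (hy : 0 ≤ y) : 0 ≤ gapRemainder μ H K y := by
  have : 0 ≤ 1 + μ * y := by nlinarith
  unfold gapRemainder
  positivity

lemma gapPotential_zero (hK0 : K 0 = 0) : gapPotential μ H K P 0 = 0 := by
  simp [gapPotential, hK0]

lemma gapPotential_eq_zero (hH : H y = 0) (hK : K y = 0) : gapPotential μ H K P y = 0 := by
  simp [gapPotential, hH, hK]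

end gapPotential

theorem integral_mul_linearizedOp_le {μ B : ℝ} {H h : ℝ → ℝ} (hμ : 0 ≤ μ) (hB : 0 ≤ B)
    (hh : Continuous h) (hH : ∀ y, HasDerivAt H (-h y) y) (hHB : H B = 0)
    (hmom : ∫ y in (0:ℝ)..B, y * h y = 0) :
    ∫ y in (0:ℝ)..B, H y * linearizedOp μ H h y * exp (μ * y)
      ≤ -∫ y in (0:ℝ)..B, H y ^ 2 * exp (μ * y) := by
  have hHc : Continuous H := continuous_iff_continuousAt.2 fun y => (hH y).continuousAt
  set K := fun y => ∫ t in y..B, H t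
  set P := fun y => ∫ t in (0:ℝ)..y, exp (μ * t) * H t
  have hK : ∀ y, HasDerivAt K (-H y) y := fun y =>
    intervalIntegral.integral_hasDerivAt_left (hHc.intervalIntegrable _ _)
      (hHc.stronglyMeasurableAtFilter _ _) hHc.continuousAt
  have hP : ∀ y, HasDerivAt P (exp (μ * y) * H y) y := fun y =>
    ((by fun_prop : Continuous fun t => exp (μ * t) * H t).integral_hasStrictDerivAt 0 y).hasDerivAt
  have hPc : Continuous P := continuous_iff_continuousAt.2 fun y => (hP y).continuousAt
  have hK0 : K 0 = 0 := by
    have hparts := intervalIntegral.integral_mul_deriv_eq_deriv_mul (fun x _ => hasDerivAt_id x)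
      (fun x _ => hH x) intervalIntegrable_const (hh.neg.intervalIntegrable 0 B)
    simpa [hHB, hmom] using hparts
  have hRc := continuous_gapRemainder (μ := μ) hHc (hH 0).differentiableAt hK hK0
  have hR : 0 ≤ ∫ y in (0:ℝ)..B, gapRemainder μ H K y :=
    intervalIntegral.integral_nonneg hB fun y hy => gapRemainder_nonneg hμ hy.1
  have hLc := continuous_linearizedOp (μ := μ) hHc hh
  have hftc : ∫ y in (0:ℝ)..B,
      (H y * linearizedOp μ H h y * exp (μ * y) + H y ^ 2 * exp (μ * y)
        + gapRemainder μ H K y) = 0 := by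
    rw [intervalIntegral.integral_eq_sub_of_hasDeriv_right_of_le (f := gapPotential μ H K P)
      (f' := fun y => H y * linearizedOp μ H h y * exp (μ * y) + H y ^ 2 * exp (μ * y)
        + gapRemainder μ H K y) hB
      (continuous_gapPotential hHc hK hK0 hPc).continuousOn
      (fun y hy => (hasDerivAt_gapPotential hy.1.ne' (hH y) (hK y) (hP y)).hasDerivWithinAt)
      ((by fun_prop : Continuous _).intervalIntegrable _ _),
      gapPotential_eq_zero hHB (by simp [K]), gapPotential_zero hK0, sub_zero]
  rw [intervalIntegral.integral_add ((by fun_prop : Continuous _).intervalIntegrable _ _)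
      ((by fun_prop : Continuous _).intervalIntegrable _ _),
    intervalIntegral.integral_add ((by fun_prop : Continuous _).intervalIntegrable _ _)
      ((by fun_prop : Continuous _).intervalIntegrable _ _)] at hftc
  linarith

theorem spectral_gap_inequality_general (ρ : ℝ) (hρ : 0 < ρ) (μ : ℝ) (hμ : μ = 2/ρ)
    (gρ : ℝ → ℝ) (hgρ : ∀ y, gρ y = (4/ρ) * Real.exp (-μ*y))
    (h : ℝ → ℝ) (hC1 : ContDiff ℝ 1 h) (hcs : HasCompactSupport h)
    (H : ℝ → ℝ) (hH : ∀ y, H y = ∫ x in Ioi y, h x)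
    (hmass : (∫ y in Ioi (0:ℝ), y * h y) = 0)
    (Lh : ℝ → ℝ)
    (hLh : ∀ y, Lh y = -H y - y * h y + ∫ x in (0:ℝ)..y, gρ x * H (y-x)) :
    (∫ y in Ioi (0:ℝ), H y * Lh y * Real.exp (μ*y))
      ≤ - ∫ y in Ioi (0:ℝ), (H y)^2 * Real.exp (μ*y) := by
  have hhc : Continuous h := hC1.continuous
  have hHd : ∀ y, HasDerivAt H (-h y) y := by
    rw [funext hH]
    exact hasDerivAt_integral_Ioi (hhc.integrable_of_hasCompactSupport hcs) hhc
  have hHc : Continuous H := continuous_iff_continuousAt.2 fun y => (hHd y).continuousAt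
  obtain rfl : Lh = linearizedOp μ H h := funext fun y => by
    rw [hLh, linearizedOp, ← intervalIntegral_exp_mul_comp_sub]
    congr! 3 with x
    rw [hgρ, hμ]
    ring
  obtain ⟨B, hB, hhB⟩ := hcs.exists_nonneg_forall_gt_eq_zero
  have hHB : ∀ y, B ≤ y → H y = 0 := fun y hy =>
    (hH y).trans (setIntegral_eq_zero_of_forall_eq_zero fun x hx => hhB x (hy.trans_lt hx))
  have hLc := continuous_linearizedOp (μ := μ) hHc hhc
  rw [setIntegral_Ioi_eq_intervalIntegral ((by fun_prop : Continuous _).intervalIntegrable _ _)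
      fun y hy => by simp [hHB y hy.le],
    setIntegral_Ioi_eq_intervalIntegral ((by fun_prop : Continuous _).intervalIntegrable _ _)
      fun y hy => by simp [hHB y hy.le]]
  refine integral_mul_linearizedOp_le (by rw [hμ]; positivity) hB hhc hHd (hHB B le_rfl) ?_
  rwa [← setIntegral_Ioi_eq_intervalIntegral ((by fun_prop : Continuous _).intervalIntegrable _ _)
    fun y hy => by simp [hhB y hy]]

theorem spectral_gap_inequality (ρ : ℝ) (hρ : 0 < ρ) (μ : ℝ) (hμ : μ = 2/ρ)
    (gρ : ℝ → ℝ) (hgρ : ∀ y, gρ y = (4/ρ) * Real.exp (-μ*y))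
    (h : ℝ → ℝ) (hC1 : ContDiff ℝ 1 h) (hcs : HasCompactSupport h)
    (hsupp : tsupport h ⊆ Ioi 0)
    (H : ℝ → ℝ) (hH : ∀ y, H y = ∫ x in Ioi y, h x)
    (hHint : IntegrableOn (fun y => (H y)^2 * Real.exp (μ*y)) (Ioi 0))
    (hmass : (∫ y in Ioi (0:ℝ), y * h y) = 0)
    (Lh : ℝ → ℝ)
    (hLh : ∀ y, Lh y = -H y - y * h y + ∫ x in (0:ℝ)..y, gρ x * H (y-x)) :
    (∫ y in Ioi (0:ℝ), H y * Lh y * Real.exp (μ*y))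
      ≤ - ∫ y in Ioi (0:ℝ), (H y)^2 * Real.exp (μ*y) :=
  spectral_gap_inequality_general ρ hρ μ hμ gρ hgρ h hC1 hcs H hH hmass Lh hLh
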